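/- Let w : [0,∞) → ℝ be bounded, continuous, nondecreasing and nonpositive, and write F(z) = g(z) + λ₀·(Kw)(z) and ρ(z) = 2/(μ²·z²·B(z)), where B(z) = ψ'(z)·η(z) − ψ(z)·η'(z) is the (strictly positive) Wronskian of ψ and η. Let φ* > 0 satisfy ∫_0^{φ*} ψ(z)·ρ(z)·F(z) dz = 0 and ∫_0^{φ} ψ(z)·ρ(z)·F(z) dz < 0 for every φ ∈ (0, φ*). Define H(φ) = ψ(φ)·∫_φ^{φ*} η(z)·ρ(z)·F(z) dz + η(φ)·∫_0^φ ψ(z)·ρ(z)·F(z) dz for 0 < φ ≤ φ*, and H(φ) = 0 for φ ≥ φ*. Then all the integrals converge and: (i) H is continuously differentiable on (0,∞) and twice continuously differentiable on (0,∞)∖{φ*}; (ii) H(φ*) = H'(φ*) = 0 (smooth fit); (iii) H(φ) < 0 for every φ ∈ (0, φ*); (iv) (μ²/2)·φ²·H''(φ) + (λ + a·φ)·H'(φ) − (λ + λ₀)·H(φ) + F(φ) = 0 for every φ ∈ (0, φ*); (v) F(φ) > 0 for every φ ∈ (φ*, ∞). -/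

import Mathlib

open MeasureTheory

/-- The forcing term `F(z) = g(z) + λ₀ (Kw)(z) = z - λ/c + λ₀ ∫_E w((λ₁/λ₀) f(e) z) ν₀(de)`. -/
noncomputable def forcingF {E : Type*} [MeasurableSpace E] (ν₀ : Measure E)
    (f : E → ℝ) (lam lam0 lam1 c : ℝ) (w : ℝ → ℝ) (z : ℝ) : ℝ :=
  z - lam / c + lam0 * ∫ e, w (lam1 / lam0 * f e * z) ∂ν₀

/-- The weight `ρ(z) = 2 / (μ² z² B(z))`, where `B = ψ' η - ψ η'` is the Wronskian. -/
noncomputable def rhoWeight (μ : ℝ) (ψ η : ℝ → ℝ) (z : ℝ) : ℝ :=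
  2 / (μ ^ 2 * z ^ 2 * (deriv ψ z * η z - ψ z * deriv η z))

/-- The candidate value function of Lemma 4.3:
`H(φ) = ψ(φ) ∫_φ^{φ*} η ρ F + η(φ) ∫_0^φ ψ ρ F` for `0 < φ ≤ φ*`, and `H(φ) = 0` for `φ ≥ φ*`. -/
noncomputable def Hsol {E : Type*} [MeasurableSpace E] (ν₀ : Measure E)
    (f : E → ℝ) (lam lam0 lam1 c μ : ℝ) (w ψ η : ℝ → ℝ) (φs φ : ℝ) : ℝ :=
  if φ ≤ φs then
    ψ φ * (∫ z in Set.Ioo φ φs,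
        η z * rhoWeight μ ψ η z * forcingF ν₀ f lam lam0 lam1 c w z) +
    η φ * (∫ z in Set.Ioo (0 : ℝ) φ,
        ψ z * rhoWeight μ ψ η z * forcingF ν₀ f lam lam0 lam1 c w z)
  else 0

/-!
Variation of parameters. With `k = ρ F`, `I(x) = ∫_0^x ψ k` and `J(x) = ∫_x^{φ*} η k`, the
function `ψ J + η I` has derivative `ψ' J + η' I` and second derivative `ψ'' J + η'' I - B k`, so
it solves the inhomogeneous equation on `(0, ∞)` because `(μ²/2) x² B ρ = 1`. Since
`I(φ*) = J(φ*) = 0`, it vanishes at `φ*` together with its derivative, hence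
`H = (ψ J + η I)(min φ φ*)` is `C¹` (smooth fit). On `(0, φ*)` we have `ψ J + η I = ψ Q` with
`Q = J + (η / ψ) I`, `Q' = -(B / ψ²) I > 0` and `Q(φ*) = 0`, so `H < 0`. Near `0` the weight
`ρ(z)` is a multiple of `z^(γ-2) e^(-β/z)`, which is bounded, so `ψ ρ F` is integrable there.
Finally `F` is strictly increasing; if `F(φ*) < 0` then `F < 0` on `(0, φ*)` and
`∫_0^{φ*} ψ ρ F < 0`, contradicting the choice of `φ*`.
-/

open Set Filter Topology Real

lemma contDiffOn_succ_of_hasDerivAt {f f' : ℝ → ℝ} {s : Set ℝ} {n : ℕ} (hs : IsOpen s)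
    (hf : ∀ x ∈ s, HasDerivAt f (f' x) x) (hf' : ContDiffOn ℝ n f' s) :
    ContDiffOn ℝ (n + 1) f s := by
  rw [contDiffOn_succ_iff_deriv_of_isOpen hs]
  refine ⟨fun x hx => (hf x hx).differentiableAt.differentiableWithinAt, by simp, ?_⟩
  exact hf'.congr fun x hx => (hf x hx).deriv

lemma ContDiffOn.hasDerivAt_deriv_of_isOpen {f : ℝ → ℝ} {s : Set ℝ} {x : ℝ}
    (hf : ContDiffOn ℝ 2 f s) (hs : IsOpen s) (hx : x ∈ s) :
    HasDerivAt (deriv f) (deriv (deriv f) x) x :=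
  (((hf.deriv_of_isOpen hs (m := 1) (by norm_num)).contDiffAt (hs.mem_nhds hx)).differentiableAt
    one_ne_zero).hasDerivAt

lemma hasDerivAt_integral_Ioo_zero {g : ℝ → ℝ} (hint : ∀ b, 0 < b → IntegrableOn g (Ioo 0 b))
    (hg : ContinuousOn g (Ioi 0)) {x : ℝ} (hx : 0 < x) :
    HasDerivAt (fun u => ∫ z in Ioo 0 u, g z) (g x) x := by
  have heq : (fun u => ∫ z in (0)..u, g z) =ᶠ[𝓝 x] fun u => ∫ z in Ioo 0 u, g z := by
    filter_upwards [eventually_gt_nhds hx] with u hu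
    rw [intervalIntegral.integral_of_le hu.le, integral_Ioc_eq_integral_Ioo]
  exact (intervalIntegral.integral_hasDerivAt_right
    ((intervalIntegrable_iff_integrableOn_Ioo_of_le hx.le).2 (hint x hx))
    (hg.stronglyMeasurableAtFilter isOpen_Ioi x hx)
    (hg.continuousAt (Ioi_mem_nhds hx))).congr_of_eventuallyEq heq.symm

lemma hasDerivAt_integral_left_of_continuousOn_Ioi {g : ℝ → ℝ} (hg : ContinuousOn g (Ioi 0))
    {x b : ℝ} (hx : 0 < x) (hb : 0 < b) :
    HasDerivAt (fun u => ∫ z in u..b, g z) (-g x) x :=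
  intervalIntegral.integral_hasDerivAt_left
    ((hg.mono fun _ hz => (lt_min hx hb).trans_le hz.1).intervalIntegrable)
    (hg.stronglyMeasurableAtFilter isOpen_Ioi x hx) (hg.continuousAt (Ioi_mem_nhds hx))

lemma MeasureTheory.IntegrableOn.of_continuousOn_Ioo_of_abs_le {g : ℝ → ℝ} {a b C : ℝ}
    (hg : ContinuousOn g (Ioo a b)) (hC : ∀ z ∈ Ioo a b, |g z| ≤ C) : IntegrableOn g (Ioo a b) :=
  .of_bound measure_Ioo_lt_top (hg.aestronglyMeasurable measurableSet_Ioo) C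
    ((ae_restrict_iff' measurableSet_Ioo).2 (ae_of_all _ hC))

lemma pos_of_strictMonoOn_of_setIntegral_eq_zero {F u : ℝ → ℝ} {b x : ℝ} (hb : 0 < b)
    (hF : StrictMonoOn F (Ici 0)) (hu : ∀ z, 0 < z → 0 < u z)
    (hint : IntegrableOn (fun z => u z * F z) (Ioo 0 b))
    (h0 : ∫ z in Ioo 0 b, u z * F z = 0) (hx : b < x) : 0 < F x := by
  suffices hFb : 0 ≤ F b from hFb.trans_lt (hF hb.le (hb.trans hx).le hx)
  by_contra! hFb
  have hint' : IntegrableOn (fun z => -(u z * F z)) (Ioo 0 b) := hint.neg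
  have hpos := intervalIntegral.intervalIntegral_pos_of_pos_on
    ((intervalIntegrable_iff_integrableOn_Ioo_of_le hb.le).2 hint')
    (fun z hz => neg_pos.2 (mul_neg_of_pos_of_neg (hu z hz.1)
      ((hF hz.1.le hb.le hz.2).trans hFb))) hb
  rw [intervalIntegral.integral_of_le hb.le, integral_Ioc_eq_integral_Ioo, integral_neg, h0]
    at hpos
  exact lt_irrefl 0 (neg_zero (G := ℝ) ▸ hpos)

lemma exists_rpow_mul_exp_neg_div_le (m : ℝ) {β : ℝ} (hβ : 0 < β) (b : ℝ) :
    ∃ K, ∀ z ∈ Ioc 0 b, z ^ m * exp (-(β / z)) ≤ K := by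
  obtain ⟨n, hn⟩ := exists_nat_ge (-m)
  refine ⟨n.factorial / β ^ n * b ^ (m + n), fun z ⟨hz, hzb⟩ => ?_⟩
  have hexp : exp (-(β / z)) ≤ n.factorial / β ^ n * z ^ n := by
    calc exp (-(β / z)) ≤ ((β / z) ^ n / n.factorial)⁻¹ := by
          rw [exp_neg]
          exact inv_anti₀ (by positivity) (pow_div_factorial_le_exp _ (by positivity) n)
      _ = n.factorial / β ^ n * z ^ n := by
          field_simp
          rw [← mul_pow, div_mul_cancel₀ β hz.ne']
  calc z ^ m * exp (-(β / z)) ≤ z ^ m * (n.factorial / β ^ n * z ^ n) := by gcongr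
    _ = n.factorial / β ^ n * z ^ (m + n) := by rw [rpow_add hz, rpow_natCast]; ring
    _ ≤ n.factorial / β ^ n * b ^ (m + n) := by
        gcongr
        linarith

section SmoothFit

variable {h : ℝ → ℝ} {a b x : ℝ}

lemma comp_min_eventuallyEq_of_lt (hx : x < b) : (fun y => h (min y b)) =ᶠ[𝓝 x] h := by
  filter_upwards [eventually_lt_nhds hx] with y hy
  rw [min_eq_left hy.le]

lemma comp_min_eventuallyEq_of_gt (hx : b < x) :
    (fun y => h (min y b)) =ᶠ[𝓝 x] fun _ => h b := by
  filter_upwards [eventually_gt_nhds hx] with y hy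
  rw [min_eq_right hy.le]

lemma HasDerivAt.comp_min {h' : ℝ} (hd : HasDerivAt h h' (min x b)) (hb : b ≤ x → h' = 0) :
    HasDerivAt (fun y => h (min y b)) h' x := by
  rcases lt_trichotomy x b with hxb | rfl | hxb
  · rw [min_eq_left hxb.le] at hd
    exact hd.congr_of_eventuallyEq (comp_min_eventuallyEq_of_lt hxb)
  · rw [min_self] at hd
    have hleft : HasDerivWithinAt (fun y => h (min y x)) h' (Iic x) x :=
      hd.hasDerivWithinAt.congr (fun y hy => by rw [min_eq_left hy]) (by rw [min_self])
    have hright : HasDerivWithinAt (fun y => h (min y x)) h' (Ici x) x := by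
      rw [hb le_rfl]
      exact (hasDerivWithinAt_const x _ (h x)).congr (fun y hy => by rw [min_eq_right hy])
        (by rw [min_self])
    simpa using hleft.union hright
  · rw [hb hxb.le]
    exact (hasDerivAt_const x (h b)).congr_of_eventuallyEq (comp_min_eventuallyEq_of_gt hxb)

lemma HasDerivAt.comp_min_self (hd : HasDerivAt h 0 b) :
    HasDerivAt (fun y => h (min y b)) 0 b :=
  HasDerivAt.comp_min (by rwa [min_self]) fun _ => rfl

lemma contDiffOn_one_comp_min (hh : ContDiffOn ℝ 1 h (Ioi a)) (hab : a < b)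
    (hb : deriv h b = 0) : ContDiffOn ℝ 1 (fun y => h (min y b)) (Ioi a) := by
  have hmin : MapsTo (fun y => min y b) (Ioi a) (Ioi a) := fun y hy => lt_min hy hab
  have hd : ∀ y ∈ Ioi a, HasDerivAt (fun y => h (min y b)) (deriv h (min y b)) y :=
    fun y hy => HasDerivAt.comp_min
      (((hh.contDiffAt (Ioi_mem_nhds (hmin hy))).differentiableAt one_ne_zero).hasDerivAt)
      fun hby => by rw [min_eq_right hby, hb]
  simpa using contDiffOn_succ_of_hasDerivAt (n := 0) isOpen_Ioi hd (contDiffOn_zero.2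
    ((hh.continuousOn_deriv_of_isOpen isOpen_Ioi le_rfl).comp
      (continuous_id.min continuous_const).continuousOn hmin))

lemma contDiffOn_comp_min_diff_singleton {n : WithTop ℕ∞} {s : Set ℝ} (hh : ContDiffOn ℝ n h s)
    (hs : IsOpen s) : ContDiffOn ℝ n (fun y => h (min y b)) (s \ {b}) := by
  rintro x ⟨hx, hxb⟩
  rcases lt_or_gt_of_ne hxb with hlt | hgt
  · exact ((hh.contDiffAt (hs.mem_nhds hx)).congr_of_eventuallyEq
      (comp_min_eventuallyEq_of_lt hlt)).contDiffWithinAt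
  · exact (contDiffAt_const.congr_of_eventuallyEq
      (comp_min_eventuallyEq_of_gt hgt)).contDiffWithinAt

end SmoothFit

namespace VariationOfParameters

structure Admissible (ψ η k : ℝ → ℝ) : Prop where
  contDiffOn_fst : ContDiffOn ℝ 2 ψ (Ioi 0)
  contDiffOn_snd : ContDiffOn ℝ 2 η (Ioi 0)
  continuousOn_kernel : ContinuousOn k (Ioi 0)
  integrableOn_Ioo_zero : ∀ x, 0 < x → IntegrableOn (fun z => ψ z * k z) (Ioo 0 x)

/-- With `(p, q) = (ψ, η)` this is the solution, with `(ψ', η')` its derivative, and with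
`(1, η / ψ)` the solution divided by `ψ`. -/
noncomputable def combination (ψ η k : ℝ → ℝ) (b : ℝ) (p q : ℝ → ℝ) (x : ℝ) : ℝ :=
  p x * (∫ z in x..b, η z * k z) + q x * ∫ z in Ioo 0 x, ψ z * k z

noncomputable abbrev solution (ψ η k : ℝ → ℝ) (b : ℝ) : ℝ → ℝ :=
  combination ψ η k b ψ η

variable {ψ η k : ℝ → ℝ} {b x : ℝ}

lemma Admissible.hasDerivAt_fst (h : Admissible ψ η k) (hx : 0 < x) :
    HasDerivAt ψ (deriv ψ x) x :=
  ((h.contDiffOn_fst.contDiffAt (Ioi_mem_nhds hx)).differentiableAt two_ne_zero).hasDerivAt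

lemma Admissible.hasDerivAt_snd (h : Admissible ψ η k) (hx : 0 < x) :
    HasDerivAt η (deriv η x) x :=
  ((h.contDiffOn_snd.contDiffAt (Ioi_mem_nhds hx)).differentiableAt two_ne_zero).hasDerivAt

lemma Admissible.hasDerivAt_integral_fst (h : Admissible ψ η k) (hx : 0 < x) :
    HasDerivAt (fun u => ∫ z in Ioo 0 u, ψ z * k z) (ψ x * k x) x :=
  hasDerivAt_integral_Ioo_zero h.integrableOn_Ioo_zero
    (h.contDiffOn_fst.continuousOn.fun_mul h.continuousOn_kernel) hx

lemma Admissible.hasDerivAt_integral_snd (h : Admissible ψ η k) (hx : 0 < x) (hb : 0 < b) :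
    HasDerivAt (fun u => ∫ z in u..b, η z * k z) (-(η x * k x)) x :=
  hasDerivAt_integral_left_of_continuousOn_Ioi
    (h.contDiffOn_snd.continuousOn.fun_mul h.continuousOn_kernel) hx hb

lemma Admissible.integrableOn_Ioo_snd (h : Admissible ψ η k) (hx : 0 < x) :
    IntegrableOn (fun z => η z * k z) (Ioo x b) :=
  ((h.contDiffOn_snd.continuousOn.fun_mul h.continuousOn_kernel).mono
    fun _ hz => hx.trans_le hz.1).integrableOn_Icc.mono_set Ioo_subset_Icc_self

lemma hasDerivAt_combination (h : Admissible ψ η k) {p q p' q' : ℝ → ℝ}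
    (hp : HasDerivAt p (p' x) x) (hq : HasDerivAt q (q' x) x) (hx : 0 < x) (hb : 0 < b) :
    HasDerivAt (combination ψ η k b p q)
      (combination ψ η k b p' q' x + (q x * ψ x - p x * η x) * k x) x := by
  refine ((hp.fun_mul (h.hasDerivAt_integral_snd hx hb)).fun_add
    (hq.fun_mul (h.hasDerivAt_integral_fst hx))).congr_deriv ?_
  simp only [combination]
  ring

lemma continuousOn_combination (h : Admissible ψ η k) {p q : ℝ → ℝ}
    (hp : ContinuousOn p (Ioi 0)) (hq : ContinuousOn q (Ioi 0)) (hb : 0 < b) :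
    ContinuousOn (combination ψ η k b p q) (Ioi 0) :=
  (hp.fun_mul fun _ hx => (h.hasDerivAt_integral_snd hx hb).continuousAt.continuousWithinAt).fun_add
    (hq.fun_mul fun _ hx => (h.hasDerivAt_integral_fst hx).continuousAt.continuousWithinAt)

lemma hasDerivAt_solution (h : Admissible ψ η k) (hx : 0 < x) (hb : 0 < b) :
    HasDerivAt (solution ψ η k b) (combination ψ η k b (deriv ψ) (deriv η) x) x := by
  simpa [mul_comm] using
    hasDerivAt_combination h (h.hasDerivAt_fst hx) (h.hasDerivAt_snd hx) hx hb

lemma hasDerivAt_combination_deriv (h : Admissible ψ η k) (hx : 0 < x) (hb : 0 < b) :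
    HasDerivAt (combination ψ η k b (deriv ψ) (deriv η))
      (combination ψ η k b (deriv (deriv ψ)) (deriv (deriv η)) x -
        (deriv ψ x * η x - ψ x * deriv η x) * k x) x := by
  convert hasDerivAt_combination h (h.contDiffOn_fst.hasDerivAt_deriv_of_isOpen isOpen_Ioi hx)
    (h.contDiffOn_snd.hasDerivAt_deriv_of_isOpen isOpen_Ioi hx) hx hb using 1
  ring

lemma contDiffOn_solution (h : Admissible ψ η k) (hb : 0 < b) :
    ContDiffOn ℝ 2 (solution ψ η k b) (Ioi 0) := by
  have hψ := h.contDiffOn_fst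
  have hη := h.contDiffOn_snd
  have hψ'' := (hψ.deriv_of_isOpen isOpen_Ioi (m := 1) (by norm_num)).continuousOn_deriv_of_isOpen
    isOpen_Ioi le_rfl
  have hη'' := (hη.deriv_of_isOpen isOpen_Ioi (m := 1) (by norm_num)).continuousOn_deriv_of_isOpen
    isOpen_Ioi le_rfl
  have hψ' := hψ.continuousOn_deriv_of_isOpen isOpen_Ioi (by norm_num)
  have hη' := hη.continuousOn_deriv_of_isOpen isOpen_Ioi (by norm_num)
  refine contDiffOn_succ_of_hasDerivAt (n := 1) isOpen_Ioi
    (fun x hx => hasDerivAt_solution h hx hb)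
    (contDiffOn_succ_of_hasDerivAt (n := 0) isOpen_Ioi
      (fun x hx => hasDerivAt_combination_deriv h hx hb) (contDiffOn_zero.2 ?_))
  exact (continuousOn_combination h hψ'' hη'' hb).sub
    (((hψ'.mul hη.continuousOn).sub (hψ.continuousOn.mul hη')).mul h.continuousOn_kernel)

lemma solution_ode (h : Admissible ψ η k) (hx : 0 < x) (hb : 0 < b) {P Q R : ℝ}
    (hψ : P * deriv (deriv ψ) x + Q * deriv ψ x = R * ψ x)
    (hη : P * deriv (deriv η) x + Q * deriv η x = R * η x) :
    P * deriv (deriv (solution ψ η k b)) x + Q * deriv (solution ψ η k b) x -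
      R * solution ψ η k b x = -(P * (deriv ψ x * η x - ψ x * deriv η x) * k x) := by
  have hd : deriv (solution ψ η k b) =ᶠ[𝓝 x] combination ψ η k b (deriv ψ) (deriv η) :=
    eventually_of_mem (Ioi_mem_nhds hx) fun y hy => (hasDerivAt_solution h hy hb).deriv
  rw [hd.deriv_eq, (hasDerivAt_combination_deriv h hx hb).deriv,
    (hasDerivAt_solution h hx hb).deriv]
  simp only [combination]
  linear_combination (∫ z in x..b, η z * k z) * hψ + (∫ z in Ioo 0 x, ψ z * k z) * hη

lemma solution_self : solution ψ η k b b = η b * ∫ z in Ioo 0 b, ψ z * k z := by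
  simp [combination]

lemma hasDerivAt_solution_self (h : Admissible ψ η k) (hb : 0 < b)
    (hI : ∫ z in Ioo 0 b, ψ z * k z = 0) : HasDerivAt (solution ψ η k b) 0 b := by
  simpa [combination, hI] using hasDerivAt_solution h hb hb

lemma hasDerivAt_combination_one_div (h : Admissible ψ η k) (hψ : ∀ y, 0 < y → 0 < ψ y)
    (hx : 0 < x) (hb : 0 < b) :
    HasDerivAt (combination ψ η k b 1 (η / ψ))
      (-((deriv ψ x * η x - ψ x * deriv η x) / ψ x ^ 2) * ∫ z in Ioo 0 x, ψ z * k z) x := by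
  refine (hasDerivAt_combination h (p' := 0)
    (q' := fun y => (deriv η y * ψ y - η y * deriv ψ y) / ψ y ^ 2) (hasDerivAt_const x 1)
    ((h.hasDerivAt_snd hx).div (h.hasDerivAt_fst hx) (hψ x hx).ne') hx hb).congr_deriv ?_
  simp only [combination, Pi.zero_apply, Pi.div_apply]
  field_simp [(hψ x hx).ne']
  ring

lemma solution_neg (h : Admissible ψ η k) (hψ : ∀ y, 0 < y → 0 < ψ y)
    (hW : ∀ y, 0 < y → 0 < deriv ψ y * η y - ψ y * deriv η y)
    (hI : ∀ y, 0 < y → y < b → ∫ z in Ioo 0 y, ψ z * k z < 0)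
    (hIb : ∫ z in Ioo 0 b, ψ z * k z = 0) (hx : 0 < x) (hxb : x < b) :
    solution ψ η k b x < 0 := by
  have hb := hx.trans hxb
  set Q := combination ψ η k b 1 (η / ψ)
  have hQ y (hy : 0 < y) := hasDerivAt_combination_one_div h hψ hy hb
  have hQmono : StrictMonoOn Q (Icc x b) :=
    strictMonoOn_of_deriv_pos (convex_Icc x b)
      (fun y hy => (hQ y (hx.trans_le hy.1)).continuousAt.continuousWithinAt) fun y hy => by
        rw [interior_Icc] at hy
        have hy0 := hx.trans hy.1
        rw [(hQ y hy0).deriv]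
        exact mul_pos_of_neg_of_neg (neg_neg_of_pos (div_pos (hW y hy0) (pow_pos (hψ y hy0) 2)))
          (hI y hy0 hy.2)
  have hQb : Q b = 0 := by simp [Q, combination, hIb]
  have hQx : Q x < 0 := hQb ▸ hQmono (left_mem_Icc.2 hxb.le) (right_mem_Icc.2 hxb.le) hxb
  have hfac : solution ψ η k b x = ψ x * Q x := by
    simp only [Q, combination, Pi.div_apply, Pi.one_apply]
    field_simp [(hψ x hx).ne']
  exact hfac ▸ mul_neg_of_pos_of_neg (hψ x hx) hQx

end VariationOfParameters

section Forcing

variable {E : Type*} [MeasurableSpace E] {ν : Measure E} {w : ℝ → ℝ} {g : E → ℝ} {M : ℝ}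

lemma measurable_comp_of_continuousOn_Ici (hw : ContinuousOn w (Ici 0)) (hg : Measurable g)
    (hg0 : ∀ e, 0 ≤ g e) : Measurable fun e => w (g e) := by
  have hext : Continuous fun x => w (max x 0) :=
    hw.comp_continuous (continuous_id.max continuous_const) fun x => le_max_right x 0
  simpa only [Function.comp_def, max_eq_left (hg0 _)] using hext.measurable.comp hg

lemma integrable_comp_of_continuousOn_Ici [IsFiniteMeasure ν] (hw : ContinuousOn w (Ici 0))
    (hM : ∀ x, 0 ≤ x → |w x| ≤ M) (hg : Measurable g) (hg0 : ∀ e, 0 ≤ g e) :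
    Integrable (fun e => w (g e)) ν :=
  .of_bound (measurable_comp_of_continuousOn_Ici hw hg hg0).aestronglyMeasurable M
    (ae_of_all _ fun e => hM _ (hg0 e))

lemma continuousOn_integral_comp_mul [IsFiniteMeasure ν] (hw : ContinuousOn w (Ici 0))
    (hM : ∀ x, 0 ≤ x → |w x| ≤ M) (hg : Measurable g) (hg0 : ∀ e, 0 ≤ g e) :
    ContinuousOn (fun z => ∫ e, w (g e * z) ∂ν) (Ici 0) :=
  continuousOn_of_dominated (bound := fun _ => M)
    (fun z hz => (measurable_comp_of_continuousOn_Ici hw (hg.mul_const z)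
      fun e => mul_nonneg (hg0 e) hz).aestronglyMeasurable)
    (fun _ hz => ae_of_all _ fun e => hM _ (mul_nonneg (hg0 e) hz)) (integrable_const M)
    (ae_of_all _ fun e => hw.comp (continuousOn_const.mul continuousOn_id)
      fun _ hz => mul_nonneg (hg0 e) hz)

lemma monotoneOn_integral_comp_mul [IsFiniteMeasure ν] (hw : ContinuousOn w (Ici 0))
    (hM : ∀ x, 0 ≤ x → |w x| ≤ M) (hmono : MonotoneOn w (Ici 0)) (hg : Measurable g)
    (hg0 : ∀ e, 0 ≤ g e) :
    MonotoneOn (fun z => ∫ e, w (g e * z) ∂ν) (Ici 0) := by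
  intro x hx y hy hxy
  have hint : ∀ z ∈ Ici (0 : ℝ), Integrable (fun e => w (g e * z)) ν := fun z hz =>
    integrable_comp_of_continuousOn_Ici hw hM (hg.mul_const z) fun e => mul_nonneg (hg0 e) hz
  exact integral_mono (hint x hx) (hint y hy) fun e =>
    hmono (mul_nonneg (hg0 e) hx) (mul_nonneg (hg0 e) hy) (mul_le_mul_of_nonneg_left hxy (hg0 e))

variable {f : E → ℝ} {lam lam0 lam1 c : ℝ}

lemma continuousOn_forcingF [IsFiniteMeasure ν] (hw : ContinuousOn w (Ici 0))
    (hM : ∀ x, 0 ≤ x → |w x| ≤ M) (hf : Measurable f) (hf0 : ∀ e, 0 ≤ f e)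
    (hratio : 0 ≤ lam1 / lam0) : ContinuousOn (forcingF ν f lam lam0 lam1 c w) (Ici 0) :=
  (continuousOn_id.sub continuousOn_const).add (continuousOn_const.mul
    (continuousOn_integral_comp_mul hw hM (hf.const_mul _) fun e => mul_nonneg hratio (hf0 e)))

lemma strictMonoOn_forcingF [IsFiniteMeasure ν] (hw : ContinuousOn w (Ici 0))
    (hM : ∀ x, 0 ≤ x → |w x| ≤ M) (hmono : MonotoneOn w (Ici 0)) (hf : Measurable f)
    (hf0 : ∀ e, 0 ≤ f e) (hlam0 : 0 ≤ lam0) (hratio : 0 ≤ lam1 / lam0) :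
    StrictMonoOn (forcingF ν f lam lam0 lam1 c w) (Ici 0) := by
  intro x hx y hy hxy
  have hK := mul_le_mul_of_nonneg_left (monotoneOn_integral_comp_mul (ν := ν) hw hM hmono
    (hf.const_mul _) (fun e => mul_nonneg hratio (hf0 e)) hx hy hxy.le) hlam0
  simp only [forcingF]
  linarith

end Forcing

section Weight

variable {μ : ℝ} {ψ η : ℝ → ℝ}

lemma rhoWeight_pos (hμ : μ ≠ 0) {z : ℝ} (hz : 0 < z)
    (hB : 0 < deriv ψ z * η z - ψ z * deriv η z) : 0 < rhoWeight μ ψ η z := by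
  unfold rhoWeight; positivity

lemma rhoWeight_mul_wronskian (hμ : μ ≠ 0) {z : ℝ} (hz : 0 < z)
    (hB : 0 < deriv ψ z * η z - ψ z * deriv η z) :
    μ ^ 2 / 2 * z ^ 2 * (deriv ψ z * η z - ψ z * deriv η z) * rhoWeight μ ψ η z = 1 := by
  unfold rhoWeight; field_simp

lemma continuousOn_rhoWeight (hψ : ContDiffOn ℝ 1 ψ (Ioi 0)) (hη : ContDiffOn ℝ 1 η (Ioi 0))
    (hμ : μ ≠ 0) (hB : ∀ y, 0 < y → 0 < deriv ψ y * η y - ψ y * deriv η y) :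
    ContinuousOn (rhoWeight μ ψ η) (Ioi 0) :=
  continuousOn_const.div (continuousOn_const.mul (continuousOn_pow 2) |>.mul
      (((hψ.continuousOn_deriv_of_isOpen isOpen_Ioi le_rfl).mul hη.continuousOn).sub
        (hψ.continuousOn.mul (hη.continuousOn_deriv_of_isOpen isOpen_Ioi le_rfl))))
    fun z (hz : 0 < z) => (mul_pos (by positivity) (hB z hz)).ne'

variable {C γ β : ℝ}

lemma wronskian_pos_of_eq (hC : 0 < C)
    (hB : ∀ y, 0 < y → deriv ψ y * η y - ψ y * deriv η y = C * y ^ (-γ) * exp (β / y)) :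
    ∀ y, 0 < y → 0 < deriv ψ y * η y - ψ y * deriv η y := fun y hy => by
  rw [hB y hy]; positivity

lemma exists_abs_rhoWeight_le (hC : 0 < C) (hβ : 0 < β)
    (hB : ∀ y, 0 < y → deriv ψ y * η y - ψ y * deriv η y = C * y ^ (-γ) * exp (β / y))
    (b : ℝ) : ∃ K, ∀ z ∈ Ioc 0 b, |rhoWeight μ ψ η z| ≤ K := by
  obtain ⟨K, hK⟩ := exists_rpow_mul_exp_neg_div_le (γ - 2) hβ b
  refine ⟨2 / (μ ^ 2 * C) * K, fun z hzb => ?_⟩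
  have hz := hzb.1
  have hρ : rhoWeight μ ψ η z = 2 / (μ ^ 2 * C) * (z ^ (γ - 2) * exp (-(β / z))) := by
    rw [rhoWeight, hB z hz, rpow_sub hz, rpow_neg hz.le, exp_neg, rpow_two]
    field_simp
  rw [hρ, abs_of_nonneg (by positivity)]
  gcongr
  exact hK z hzb

end Weight

section Model

open VariationOfParameters

variable {μ : ℝ} {ψ η F : ℝ → ℝ}

lemma admissible_rhoWeight_mul (hψ : ContDiffOn ℝ 2 ψ (Ioi 0)) (hη : ContDiffOn ℝ 2 η (Ioi 0))
    (hμ : μ ≠ 0) (hψpos : ∀ y, 0 < y → 0 < ψ y) (hψmono : ∀ x y, 0 < x → x ≤ y → ψ x ≤ ψ y)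
    {C γ β : ℝ} (hC : 0 < C) (hβ : 0 < β)
    (hB : ∀ y, 0 < y → deriv ψ y * η y - ψ y * deriv η y = C * y ^ (-γ) * exp (β / y))
    (hF : ContinuousOn F (Ici 0)) :
    Admissible ψ η fun z => rhoWeight μ ψ η z * F z := by
  have hk : ContinuousOn (fun z => rhoWeight μ ψ η z * F z) (Ioi 0) :=
    (continuousOn_rhoWeight (hψ.of_le one_le_two) (hη.of_le one_le_two) hμ
      (wronskian_pos_of_eq hC hB)).mul (hF.mono Ioi_subset_Ici_self)
  refine ⟨hψ, hη, hk, fun x hx => ?_⟩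
  obtain ⟨K, hK⟩ := exists_abs_rhoWeight_le (μ := μ) hC hβ hB x
  obtain ⟨M, hM⟩ := isCompact_Icc.exists_bound_of_continuousOn
    (hF.mono (Icc_subset_Ici_self : Icc 0 x ⊆ Ici 0))
  refine .of_continuousOn_Ioo_of_abs_le (C := ψ x * (K * M))
    ((hψ.continuousOn.mul hk).mono Ioo_subset_Ioi_self) fun z hz => ?_
  have hψz := hψmono z x hz.1 hz.2.le
  have hKz := hK z (Ioo_subset_Ioc_self hz)
  have hMz : |F z| ≤ M := hM z (Ioo_subset_Icc_self hz)
  rw [abs_mul, abs_mul, abs_of_pos (hψpos z hz.1)]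
  gcongr
  · exact (hψpos x hx).le
  · exact (abs_nonneg _).trans hKz

lemma solution_rhoWeight_mul_ode {lam a lam0 b x : ℝ}
    (h : Admissible ψ η fun z => rhoWeight μ ψ η z * F z) (hμ : μ ≠ 0) (hx : 0 < x) (hb : 0 < b)
    (hW : 0 < deriv ψ x * η x - ψ x * deriv η x)
    (hψ : μ ^ 2 / 2 * x ^ 2 * deriv (deriv ψ) x + (lam + a * x) * deriv ψ x = (lam + lam0) * ψ x)
    (hη : μ ^ 2 / 2 * x ^ 2 * deriv (deriv η) x + (lam + a * x) * deriv η x = (lam + lam0) * η x) :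
    let H := solution ψ η (fun z => rhoWeight μ ψ η z * F z) b
    μ ^ 2 / 2 * x ^ 2 * deriv (deriv H) x + (lam + a * x) * deriv H x - (lam + lam0) * H x +
      F x = 0 := by
  linear_combination solution_ode h hx hb hψ hη - F x * rhoWeight_mul_wronskian hμ hx hW

lemma Hsol_eq_solution_comp_min {E : Type*} [MeasurableSpace E] {ν₀ : Measure E} {f : E → ℝ}
    {lam lam0 lam1 c : ℝ} {w : ℝ → ℝ} {φs : ℝ}
    (hroot : ∫ z in Ioo 0 φs, ψ z * rhoWeight μ ψ η z * forcingF ν₀ f lam lam0 lam1 c w z = 0) :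
    Hsol ν₀ f lam lam0 lam1 c μ w ψ η φs = fun x => solution ψ η
      (fun z => rhoWeight μ ψ η z * forcingF ν₀ f lam lam0 lam1 c w z) φs (min x φs) := by
  funext x
  by_cases hx : x ≤ φs
  · simp only [Hsol, if_pos hx, min_eq_left hx, combination, intervalIntegral.integral_of_le hx,
      integral_Ioc_eq_integral_Ioo, mul_assoc]
  · simp only [mul_assoc] at hroot
    rw [Hsol, if_neg hx, min_eq_right (not_le.1 hx).le, solution_self, hroot, mul_zero]

end Model

theorem lemma_4_3_general
    {E : Type*} [MeasurableSpace E] (ν₀ : Measure E) [IsProbabilityMeasure ν₀]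
    (f : E → ℝ) (hf : Measurable f) (hf0 : ∀ z, 0 ≤ f z)
    (lam lam0 lam1 c : ℝ)
    (hlam : 0 < lam) (hlam0 : 0 < lam0) (hlam1 : 0 < lam1)
    (μ a : ℝ) (hμ : μ ≠ 0)
    (w : ℝ → ℝ)
    (hwbdd : ∃ M : ℝ, ∀ x : ℝ, 0 ≤ x → |w x| ≤ M)
    (hwcont : ContinuousOn w (Set.Ici (0 : ℝ)))
    (hwmono : ∀ x y : ℝ, 0 ≤ x → x ≤ y → w x ≤ w y)
    (ψ η : ℝ → ℝ)
    (hψsmooth : ContDiffOn ℝ 2 ψ (Set.Ioi (0 : ℝ)))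
    (hηsmooth : ContDiffOn ℝ 2 η (Set.Ioi (0 : ℝ)))
    (hψpos : ∀ y : ℝ, 0 < y → 0 < ψ y)
    (hψmono : ∀ x y : ℝ, 0 < x → x ≤ y → ψ x ≤ ψ y)
    (hψode : ∀ y : ℝ, 0 < y →
      μ ^ 2 / 2 * y ^ 2 * deriv (deriv ψ) y + (lam + a * y) * deriv ψ y
        = (lam + lam0) * ψ y)
    (hηode : ∀ y : ℝ, 0 < y →
      μ ^ 2 / 2 * y ^ 2 * deriv (deriv η) y + (lam + a * y) * deriv η y
        = (lam + lam0) * η y)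
    (hBscale : ∃ C : ℝ, 0 < C ∧ ∀ y : ℝ, 0 < y →
      deriv ψ y * η y - ψ y * deriv η y =
        C * y ^ (-(2 * a / μ ^ 2)) * Real.exp ((2 * lam / μ ^ 2) / y))
    (φs : ℝ) (hφs : 0 < φs)
    (hroot : (∫ z in Set.Ioo (0 : ℝ) φs,
        ψ z * rhoWeight μ ψ η z * forcingF ν₀ f lam lam0 lam1 c w z) = 0)
    (hneg : ∀ φ : ℝ, 0 < φ → φ < φs →
      (∫ z in Set.Ioo (0 : ℝ) φ,
        ψ z * rhoWeight μ ψ η z * forcingF ν₀ f lam lam0 lam1 c w z) < 0) :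
    (∀ φ : ℝ, 0 < φ → φ ≤ φs →
      IntegrableOn
        (fun z => ψ z * rhoWeight μ ψ η z * forcingF ν₀ f lam lam0 lam1 c w z)
        (Set.Ioo (0 : ℝ) φ) ∧
      IntegrableOn
        (fun z => η z * rhoWeight μ ψ η z * forcingF ν₀ f lam lam0 lam1 c w z)
        (Set.Ioo φ φs)) ∧
    ContDiffOn ℝ 1 (Hsol ν₀ f lam lam0 lam1 c μ w ψ η φs) (Set.Ioi (0 : ℝ)) ∧
    ContDiffOn ℝ 2 (Hsol ν₀ f lam lam0 lam1 c μ w ψ η φs)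
      (Set.Ioi (0 : ℝ) \ {φs}) ∧
    Hsol ν₀ f lam lam0 lam1 c μ w ψ η φs φs = 0 ∧
    deriv (Hsol ν₀ f lam lam0 lam1 c μ w ψ η φs) φs = 0 ∧
    (∀ φ : ℝ, 0 < φ → φ < φs →
      Hsol ν₀ f lam lam0 lam1 c μ w ψ η φs φ < 0) ∧
    (∀ φ : ℝ, 0 < φ → φ < φs →
      μ ^ 2 / 2 * φ ^ 2 *
          deriv (deriv (Hsol ν₀ f lam lam0 lam1 c μ w ψ η φs)) φ +
        (lam + a * φ) * deriv (Hsol ν₀ f lam lam0 lam1 c μ w ψ η φs) φ -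
        (lam + lam0) * Hsol ν₀ f lam lam0 lam1 c μ w ψ η φs φ +
        forcingF ν₀ f lam lam0 lam1 c w φ = 0) ∧
    (∀ φ : ℝ, φs < φ → 0 < forcingF ν₀ f lam lam0 lam1 c w φ) := by
  obtain ⟨M, hM⟩ := hwbdd
  obtain ⟨C, hC, hB⟩ := hBscale
  rw [Hsol_eq_solution_comp_min hroot]
  set F := forcingF ν₀ f lam lam0 lam1 c w
  have hW := wronskian_pos_of_eq hC hB
  have hratio : 0 ≤ lam1 / lam0 := by positivity
  have hadm := admissible_rhoWeight_mul (F := F) hψsmooth hηsmooth hμ hψpos hψmono hC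
    (by positivity) hB (continuousOn_forcingF hwcont hM hf hf0 hratio)
  set H := VariationOfParameters.solution ψ η (fun z => rhoWeight μ ψ η z * F z) φs
  have hI : ∫ z in Ioo 0 φs, ψ z * (rhoWeight μ ψ η z * F z) = 0 := by
    simpa only [mul_assoc] using hroot
  have hH : ContDiffOn ℝ 2 H (Ioi 0) := VariationOfParameters.contDiffOn_solution hadm hφs
  have hHd : HasDerivAt H 0 φs := VariationOfParameters.hasDerivAt_solution_self hadm hφs hI
  refine ⟨fun φ hφ _ => ⟨by simpa only [mul_assoc] using hadm.integrableOn_Ioo_zero φ hφ,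
      by simpa only [mul_assoc] using hadm.integrableOn_Ioo_snd (b := φs) hφ⟩,
    contDiffOn_one_comp_min (hH.of_le one_le_two) hφs hHd.deriv,
    contDiffOn_comp_min_diff_singleton hH isOpen_Ioi,
    by simp only [min_self, H, VariationOfParameters.solution_self, hI, mul_zero],
    hHd.comp_min_self.deriv, fun φ hφ hφs' => ?_, fun φ hφ hφs' => ?_,
    fun φ => pos_of_strictMonoOn_of_setIntegral_eq_zero hφs (strictMonoOn_forcingF hwcont hM
        (fun x hx y _ hxy => hwmono x y hx hxy) hf hf0 hlam0.le hratio)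
      (fun z hz => mul_pos (hψpos z hz) (rhoWeight_pos hμ hz (hW z hz)))
      (by simpa only [mul_assoc] using hadm.integrableOn_Ioo_zero φs hφs) hroot⟩
  · simp only [min_eq_left hφs'.le]
    exact VariationOfParameters.solution_neg hadm hψpos hW
      (fun y hy hyφs => by simpa only [mul_assoc] using hneg y hy hyφs) hI hφ hφs'
  · have he := comp_min_eventuallyEq_of_lt (h := H) hφs'
    rw [he.deriv.deriv_eq, he.deriv_eq]
    simp only [min_eq_left hφs'.le]
    exact solution_rhoWeight_mul_ode hadm hμ hφ hφs (hW φ hφ) (hψode φ hφ) (hηode φ hφ)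

/-- Lemma 4.3: the explicit solution `H` of the one-step variational inequalities.
All integrals converge; `H` is `C¹` on `(0,∞)` and `C²` off `φ*` (smooth fit
`H(φ*) = H'(φ*) = 0`); `H < 0` on `(0, φ*)`; `H` solves
`(μ²/2) φ² H'' + (λ + a φ) H' - (λ + λ₀) H + F = 0` on `(0, φ*)`; and `F > 0` on `(φ*, ∞)`. -/
theorem lemma_4_3
    {E : Type*} [MeasurableSpace E] (ν₀ : Measure E) [IsProbabilityMeasure ν₀]
    (f : E → ℝ) (hf : Measurable f) (hf0 : ∀ z, 0 ≤ f z)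
    (lam lam0 lam1 c : ℝ)
    (hlam : 0 < lam) (hlam0 : 0 < lam0) (hlam1 : 0 < lam1) (hc : 0 < c)
    (μ a : ℝ) (hμ : μ ≠ 0)
    (w : ℝ → ℝ)
    (hwbdd : ∃ M : ℝ, ∀ x : ℝ, 0 ≤ x → |w x| ≤ M)
    (hwcont : ContinuousOn w (Set.Ici (0 : ℝ)))
    (hwmono : ∀ x y : ℝ, 0 ≤ x → x ≤ y → w x ≤ w y)
    (hwnp : ∀ x : ℝ, 0 ≤ x → w x ≤ 0)
    (ψ η : ℝ → ℝ)
    (hψsmooth : ContDiffOn ℝ 2 ψ (Set.Ioi (0 : ℝ)))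
    (hηsmooth : ContDiffOn ℝ 2 η (Set.Ioi (0 : ℝ)))
    (hψpos : ∀ y : ℝ, 0 < y → 0 < ψ y)
    (hηpos : ∀ y : ℝ, 0 < y → 0 < η y)
    (hψmono : ∀ x y : ℝ, 0 < x → x ≤ y → ψ x ≤ ψ y)
    (hηanti : ∀ x y : ℝ, 0 < x → x ≤ y → η y ≤ η x)
    (hψode : ∀ y : ℝ, 0 < y →
      μ ^ 2 / 2 * y ^ 2 * deriv (deriv ψ) y + (lam + a * y) * deriv ψ y
        = (lam + lam0) * ψ y)
    (hηode : ∀ y : ℝ, 0 < y →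
      μ ^ 2 / 2 * y ^ 2 * deriv (deriv η) y + (lam + a * y) * deriv η y
        = (lam + lam0) * η y)
    (hBpos : ∀ y : ℝ, 0 < y → 0 < deriv ψ y * η y - ψ y * deriv η y)
    (hBscale : ∃ C : ℝ, 0 < C ∧ ∀ y : ℝ, 0 < y →
      deriv ψ y * η y - ψ y * deriv η y =
        C * y ^ (-(2 * a / μ ^ 2)) * Real.exp ((2 * lam / μ ^ 2) / y))
    (φs : ℝ) (hφs : 0 < φs)
    (hroot : (∫ z in Set.Ioo (0 : ℝ) φs,
        ψ z * rhoWeight μ ψ η z * forcingF ν₀ f lam lam0 lam1 c w z) = 0)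
    (hneg : ∀ φ : ℝ, 0 < φ → φ < φs →
      (∫ z in Set.Ioo (0 : ℝ) φ,
        ψ z * rhoWeight μ ψ η z * forcingF ν₀ f lam lam0 lam1 c w z) < 0) :
    (∀ φ : ℝ, 0 < φ → φ ≤ φs →
      IntegrableOn
        (fun z => ψ z * rhoWeight μ ψ η z * forcingF ν₀ f lam lam0 lam1 c w z)
        (Set.Ioo (0 : ℝ) φ) ∧
      IntegrableOn
        (fun z => η z * rhoWeight μ ψ η z * forcingF ν₀ f lam lam0 lam1 c w z)
        (Set.Ioo φ φs)) ∧
    ContDiffOn ℝ 1 (Hsol ν₀ f lam lam0 lam1 c μ w ψ η φs) (Set.Ioi (0 : ℝ)) ∧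
    ContDiffOn ℝ 2 (Hsol ν₀ f lam lam0 lam1 c μ w ψ η φs)
      (Set.Ioi (0 : ℝ) \ {φs}) ∧
    Hsol ν₀ f lam lam0 lam1 c μ w ψ η φs φs = 0 ∧
    deriv (Hsol ν₀ f lam lam0 lam1 c μ w ψ η φs) φs = 0 ∧
    (∀ φ : ℝ, 0 < φ → φ < φs →
      Hsol ν₀ f lam lam0 lam1 c μ w ψ η φs φ < 0) ∧
    (∀ φ : ℝ, 0 < φ → φ < φs →
      μ ^ 2 / 2 * φ ^ 2 *
          deriv (deriv (Hsol ν₀ f lam lam0 lam1 c μ w ψ η φs)) φ +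
        (lam + a * φ) * deriv (Hsol ν₀ f lam lam0 lam1 c μ w ψ η φs) φ -
        (lam + lam0) * Hsol ν₀ f lam lam0 lam1 c μ w ψ η φs φ +
        forcingF ν₀ f lam lam0 lam1 c w φ = 0) ∧
    (∀ φ : ℝ, φs < φ → 0 < forcingF ν₀ f lam lam0 lam1 c w φ) :=
  lemma_4_3_general ν₀ f hf hf0 lam lam0 lam1 c hlam hlam0 hlam1 μ a hμ w hwbdd hwcont hwmono ψ η
    hψsmooth hηsmooth hψpos hψmono hψode hηode hBscale φs hφs hroot hneg
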